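/- Let a_i, a_j be the common edge of two adjacent nondegenerate triangles K⁺ and K⁻ in ℝ², with opposite angles α_k^{K⁺} and α_k^{K⁻}. Then the off-diagonal stiffness entry R_{ij} = ∫_{K⁺∪K⁻} ⟨∇θ_i, ∇θ_j⟩ dx = −(1/2)(cot α_k^{K⁺} + cot α_k^{K⁻}), and R_{ij} ≤ 0 if and only if α_k^{K⁺} + α_k^{K⁻} ≤ π. -/

import Mathlib

open Real MeasureTheory RealInnerProductSpace EuclideanGeometry Pointwise

section Aux

local notation "E2" => EuclideanSpace ℝ (Fin 2)

theorem my_corner_vol : volume {p : ℝ × ℝ | 0 ≤ p.1 ∧ 0 ≤ p.2 ∧ p.1 + p.2 ≤ 1}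
    = ENNReal.ofReal (1/2) := by
  have hms : MeasurableSet {p : ℝ × ℝ | 0 ≤ p.1 ∧ 0 ≤ p.2 ∧ p.1 + p.2 ≤ 1} := by
    apply MeasurableSet.inter
    · exact measurableSet_le measurable_const measurable_fst
    apply MeasurableSet.inter
    · exact measurableSet_le measurable_const measurable_snd
    · exact measurableSet_le (measurable_fst.add measurable_snd) measurable_const
  rw [show (volume : Measure (ℝ × ℝ)) = (volume : Measure ℝ).prod volume from rfl,
    Measure.prod_apply hms]
  have key : ∀ x : ℝ, volume (Prod.mk x ⁻¹' {p : ℝ × ℝ | 0 ≤ p.1 ∧ 0 ≤ p.2 ∧ p.1 + p.2 ≤ 1})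
      = Set.indicator (Set.Icc (0:ℝ) 1) (fun x => ENNReal.ofReal (1 - x)) x := by
    intro x
    by_cases hx : 0 ≤ x
    · have : Prod.mk x ⁻¹' {p : ℝ × ℝ | 0 ≤ p.1 ∧ 0 ≤ p.2 ∧ p.1 + p.2 ≤ 1}
          = Set.Icc 0 (1 - x) := by
        ext y; simp only [Set.mem_preimage, Set.mem_setOf_eq, Set.mem_Icc]
        constructor
        · rintro ⟨_, h1, h2⟩; exact ⟨h1, by linarith⟩
        · rintro ⟨h1, h2⟩; exact ⟨hx, h1, by linarith⟩
      rw [this, Real.volume_Icc]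
      by_cases hx1 : x ≤ 1
      · rw [Set.indicator_of_mem (by simp [hx, hx1])]
        norm_num
      · rw [Set.indicator_of_notMem (by simp [hx1])]
        rw [ENNReal.ofReal_eq_zero]; linarith
    · have : Prod.mk x ⁻¹' {p : ℝ × ℝ | 0 ≤ p.1 ∧ 0 ≤ p.2 ∧ p.1 + p.2 ≤ 1} = ∅ := by
        ext y; simp only [Set.mem_preimage, Set.mem_setOf_eq, Set.mem_empty_iff_false, iff_false]
        rintro ⟨h, _⟩; exact hx h
      rw [this, Set.indicator_of_notMem (by simp [hx])]
      simp
  simp_rw [key]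
  rw [lintegral_indicator (by exact measurableSet_Icc)]
  rw [← ofReal_integral_eq_lintegral_ofReal]
  · congr 1
    rw [MeasureTheory.integral_Icc_eq_integral_Ioc,
      ← intervalIntegral.integral_of_le (by norm_num : (0:ℝ) ≤ 1)]
    rw [intervalIntegral.integral_sub (intervalIntegrable_const (c := 1))
      intervalIntegral.intervalIntegrable_id]
    simp
    norm_num
  · exact (continuous_const.sub continuous_id).integrableOn_Icc
  · filter_upwards [ae_restrict_mem measurableSet_Icc] with x hx
    simp only [Set.mem_Icc] at hx; simp; linarith [hx.2]

theorem my_corner_vol_E :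
    volume {p : E2 | 0 ≤ p 0 ∧ 0 ≤ p 1 ∧ p 0 + p 1 ≤ 1} = ENNReal.ofReal (1/2) := by
  have hms : MeasurableSet {p : ℝ × ℝ | 0 ≤ p.1 ∧ 0 ≤ p.2 ∧ p.1 + p.2 ≤ 1} := by
    apply MeasurableSet.inter
    · exact measurableSet_le measurable_const measurable_fst
    apply MeasurableSet.inter
    · exact measurableSet_le measurable_const measurable_snd
    · exact measurableSet_le (measurable_fst.add measurable_snd) measurable_const
  have h1 := (volume_preserving_finTwoArrow ℝ).measure_preimage hms.nullMeasurableSet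
  have h2 := (EuclideanSpace.volume_preserving_symm_measurableEquiv_toLp (Fin 2)).measure_preimage
    ((MeasurableEquiv.finTwoArrow.measurable hms).nullMeasurableSet)
  have e1 : (MeasurableEquiv.finTwoArrow ⁻¹' {p : ℝ × ℝ | 0 ≤ p.1 ∧ 0 ≤ p.2 ∧ p.1 + p.2 ≤ 1})
      = {p : Fin 2 → ℝ | 0 ≤ p 0 ∧ 0 ≤ p 1 ∧ p 0 + p 1 ≤ 1} := rfl
  have e2 : ((MeasurableEquiv.toLp 2 (Fin 2 → ℝ)).symm ⁻¹'
        {p : Fin 2 → ℝ | 0 ≤ p 0 ∧ 0 ≤ p 1 ∧ p 0 + p 1 ≤ 1})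
      = {p : E2 | 0 ≤ p 0 ∧ 0 ≤ p 1 ∧ p 0 + p 1 ≤ 1} := rfl
  rw [e1] at h1
  rw [e1, e2] at h2
  rw [h2, h1, my_corner_vol]

theorem my_hull_corner :
    convexHull ℝ {(0 : E2), EuclideanSpace.single 0 (1:ℝ), EuclideanSpace.single 1 (1:ℝ)}
      = {p : E2 | 0 ≤ p 0 ∧ 0 ≤ p 1 ∧ p 0 + p 1 ≤ 1} := by
  apply le_antisymm
  · apply convexHull_min
    · rintro x (rfl | rfl | rfl) <;>
        simp [Set.mem_setOf_eq, EuclideanSpace.single_apply]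
    · have l0 : IsLinearMap ℝ (fun p : E2 => p 0) :=
        ⟨fun a b => rfl, fun c a => rfl⟩
      have l1 : IsLinearMap ℝ (fun p : E2 => p 1) :=
        ⟨fun a b => rfl, fun c a => rfl⟩
      have l01 : IsLinearMap ℝ (fun p : E2 => p 0 + p 1) :=
        ⟨fun a b => by simp [PiLp.add_apply]; ring, fun c a => by simp [PiLp.smul_apply]; ring⟩
      exact ((convex_halfSpace_ge l0 0).inter
        ((convex_halfSpace_ge l1 0).inter (convex_halfSpace_le l01 1)))
  · rintro p ⟨h0, h1, h01⟩
    have hrep : p = ∑ i : Fin 3,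
        ![1 - p 0 - p 1, p 0, p 1] i •
          ![(0 : E2), EuclideanSpace.single 0 (1:ℝ), EuclideanSpace.single 1 (1:ℝ)] i := by
      ext j
      simp only [Fin.sum_univ_three, Matrix.cons_val_zero, Matrix.cons_val_one, Matrix.head_cons,
        Matrix.cons_val_two, Matrix.tail_cons]
      fin_cases j <;>
        simp [PiLp.add_apply, PiLp.smul_apply, EuclideanSpace.single_apply]
    rw [hrep]
    refine Convex.sum_mem (ι := Fin 3) (t := (Finset.univ : Finset (Fin 3)))
      (w := ![1 - p 0 - p 1, p 0, p 1])
      (z := ![(0 : E2), EuclideanSpace.single 0 (1:ℝ), EuclideanSpace.single 1 (1:ℝ)])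
      (convex_convexHull ℝ _) (fun i _ => ?_) ?_ (fun i _ => ?_)
    · fin_cases i <;> simp <;> linarith
    · simp [Fin.sum_univ_three]; ring
    · apply subset_convexHull
      fin_cases i <;> simp

/-- The linear map sending `e₀ ↦ u`, `e₁ ↦ v`. -/
noncomputable def myT (u v : E2) : E2 →ₗ[ℝ] E2 where
  toFun p := p 0 • u + p 1 • v
  map_add' p q := by
    simp only [PiLp.add_apply]
    module
  map_smul' c p := by
    simp only [PiLp.smul_apply, smul_eq_mul, RingHom.id_apply]
    module

theorem myT_det (u v : E2) : LinearMap.det (myT u v) = u 0 * v 1 - u 1 * v 0 := by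
  have h := LinearMap.det_toMatrix (EuclideanSpace.basisFun (Fin 2) ℝ).toBasis (myT u v)
  rw [← h, Matrix.det_fin_two]
  simp [LinearMap.toMatrix_apply, myT, EuclideanSpace.basisFun_apply,
    OrthonormalBasis.coe_toBasis, OrthonormalBasis.coe_toBasis_repr_apply,
    EuclideanSpace.basisFun_repr, EuclideanSpace.single_apply,
    PiLp.add_apply, PiLp.smul_apply]
  ring

theorem my_tri_vol0 (u v : E2) :
    volume (convexHull ℝ {(0 : E2), u, v})
      = ENNReal.ofReal (|u 0 * v 1 - u 1 * v 0| / 2) := by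
  have himg : myT u v '' {p : E2 | 0 ≤ p 0 ∧ 0 ≤ p 1 ∧ p 0 + p 1 ≤ 1}
      = convexHull ℝ {(0 : E2), u, v} := by
    rw [← my_hull_corner, LinearMap.image_convexHull]
    congr 1
    rw [Set.image_insert_eq, Set.image_insert_eq, Set.image_singleton]
    congr 1
    · simp [myT]
    congr 1
    · show (EuclideanSpace.single 0 (1:ℝ)) 0 • u + (EuclideanSpace.single 0 (1:ℝ)) 1 • v = u
      simp [EuclideanSpace.single_apply]
    · show ({(EuclideanSpace.single 1 (1:ℝ)) 0 • u + (EuclideanSpace.single 1 (1:ℝ)) 1 • v} :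
        Set E2) = {v}
      simp [EuclideanSpace.single_apply]
  rw [← himg, Measure.addHaar_image_linearMap, my_corner_vol_E, myT_det,
    ← ENNReal.ofReal_mul (abs_nonneg _), mul_one_div]

theorem my_tri_vol (a b c : E2) :
    volume (convexHull ℝ {a, b, c})
      = ENNReal.ofReal (|(b - a) 0 * (c - a) 1 - (b - a) 1 * (c - a) 0| / 2) := by
  have hset : convexHull ℝ ({a, b, c} : Set E2)
      = a +ᵥ convexHull ℝ {(0 : E2), b - a, c - a} := by
    rw [← convexHull_vadd]
    congr 1
    ext x
    simp only [Set.mem_insert_iff, Set.mem_singleton_iff, Set.mem_vadd_set, vadd_eq_add]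
    constructor
    · rintro (rfl | rfl | rfl)
      · exact ⟨0, Or.inl rfl, by simp⟩
      · exact ⟨x - a, Or.inr (Or.inl rfl), by abel⟩
      · exact ⟨x - a, Or.inr (Or.inr rfl), by abel⟩
    · rintro ⟨y, (rfl | rfl | rfl), rfl⟩
      · simp
      · right; left; abel
      · right; right; abel
  rw [hset, measure_vadd, my_tri_vol0]

theorem my_tri_key (a b c : E2) (gi gj : E2)
    (h1 : ⟪gi, a - c⟫ = 1) (h2 : ⟪gi, b - c⟫ = 0)
    (h3 : ⟪gj, a - c⟫ = 0) (h4 : ⟪gj, b - c⟫ = 1)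
    (area : ℝ) (hpos : 0 < area)
    (hvol : volume (convexHull ℝ {a, b, c}) = ENNReal.ofReal area) :
    area * ⟪gi, gj⟫ = -(1/2) * (Real.cos (∠ a c b) / Real.sin (∠ a c b))
      ∧ 0 < ∠ a c b ∧ ∠ a c b < π := by
  set u := a - c with hu
  set v := b - c with hv
  set d := u 0 * v 1 - u 1 * v 0 with hd
  have hinner : ∀ x y : E2, ⟪x, y⟫ = x 0 * y 0 + x 1 * y 1 := by
    intro x y
    simp [PiLp.inner_apply, RCLike.inner_apply, Fin.sum_univ_two, mul_comm]
  rw [hinner] at h1 h2 h3 h4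
  -- determinant relation
  have hd1 : (gi 0 * gj 1 - gi 1 * gj 0) * d = 1 := by
    rw [hd]
    linear_combination (gj 0 * v 0 + gj 1 * v 1) * h1
      + (-(gj 0 * u 0 + gj 1 * u 1)) * h2 + h4
  have hdne : d ≠ 0 := by
    intro h0
    rw [h0, mul_zero] at hd1
    exact one_ne_zero hd1.symm
  have hgi0 : gi 0 * d = v 1 := by rw [hd]; linear_combination v 1 * h1 - u 1 * h2
  have hgi1 : gi 1 * d = -v 0 := by rw [hd]; linear_combination (-(v 0)) * h1 + u 0 * h2
  have hgj0 : gj 0 * d = -u 1 := by rw [hd]; linear_combination (-(u 1)) * h4 + v 1 * h3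
  have hgj1 : gj 1 * d = u 0 := by rw [hd]; linear_combination u 0 * h4 + (-(v 0)) * h3
  have hgg : ⟪gi, gj⟫ * d ^ 2 = -(u 0 * v 0 + u 1 * v 1) := by
    rw [hinner]
    linear_combination (gj 0 * d) * hgi0 + (gj 1 * d) * hgi1 + v 1 * hgj0 + (-(v 0)) * hgj1
  -- nonzero vectors
  have hune : u ≠ 0 := by
    intro h0
    rw [h0] at h1
    simp at h1
  have hvne : v ≠ 0 := by
    intro h0
    rw [h0] at h4
    simp at h4
  have hnu : 0 < ‖u‖ := norm_pos_iff.mpr hune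
  have hnv : 0 < ‖v‖ := norm_pos_iff.mpr hvne
  -- angle
  have hang : ∠ a c b = InnerProductGeometry.angle u v := by
    rw [EuclideanGeometry.angle, vsub_eq_sub, vsub_eq_sub, ← hu, ← hv]
  have hlag : ⟪u, u⟫ * ⟪v, v⟫ - ⟪u, v⟫ * ⟪u, v⟫ = d ^ 2 := by
    rw [hinner, hinner, hinner, hd]; ring
  have hsin : Real.sin (InnerProductGeometry.angle u v) * (‖u‖ * ‖v‖) = |d| := by
    rw [InnerProductGeometry.sin_angle_mul_norm_mul_norm, hlag, Real.sqrt_sq_eq_abs]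
  have hcos : Real.cos (InnerProductGeometry.angle u v) * (‖u‖ * ‖v‖) = ⟪u, v⟫ :=
    InnerProductGeometry.cos_angle_mul_norm_mul_norm u v
  have habs : 0 < |d| := abs_pos.mpr hdne
  have hsinpos : 0 < Real.sin (InnerProductGeometry.angle u v) := by
    have := hsin
    nlinarith [mul_pos hnu hnv]
  have hratio : Real.cos (InnerProductGeometry.angle u v)
      / Real.sin (InnerProductGeometry.angle u v) = ⟪u, v⟫ / |d| := by
    rw [div_eq_div_iff hsinpos.ne' habs.ne']
    linear_combination Real.sin (InnerProductGeometry.angle u v) * hcos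
      - Real.cos (InnerProductGeometry.angle u v) * hsin
  -- area
  have harea : area = |d| / 2 := by
    have h := hvol.symm.trans (my_tri_vol a b c)
    have hD : (b - a) 0 * (c - a) 1 - (b - a) 1 * (c - a) 0 = d := by
      rw [hd, hu, hv]
      simp only [PiLp.sub_apply]
      ring
    rw [hD] at h
    exact (ENNReal.ofReal_eq_ofReal_iff hpos.le (by positivity)).mp h
  refine ⟨?_, ?_, ?_⟩
  · rw [hang, hratio, harea]
    have h2 : |d| * |d| = d ^ 2 := by
      rw [← abs_mul, abs_mul_self]; ring
    have e1 : 2 * |d| * (|d| / 2 * (inner ℝ gi gj : ℝ)) = -(inner ℝ u v : ℝ) := by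
      rw [show (2:ℝ) * |d| * (|d| / 2 * (inner ℝ gi gj : ℝ))
          = |d| * |d| * (inner ℝ gi gj : ℝ) by ring, h2, hinner u v]
      linear_combination hgg
    have e2 : 2 * |d| * (-(1/2) * ((inner ℝ u v : ℝ) / |d|)) = -(inner ℝ u v : ℝ) := by
      field_simp
    exact mul_left_cancel₀ (by positivity : (2 * |d| : ℝ) ≠ 0) (e1.trans e2.symm)
  · rw [hang]
    rcases lt_or_eq_of_le (InnerProductGeometry.angle_nonneg u v) with h | h
    · exact h
    · exfalso; rw [← h, Real.sin_zero] at hsinpos; exact lt_irrefl 0 hsinpos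
  · rw [hang]
    rcases lt_or_eq_of_le (InnerProductGeometry.angle_le_pi u v) with h | h
    · exact h
    · exfalso; rw [h, Real.sin_pi] at hsinpos; exact lt_irrefl 0 hsinpos

theorem my_cot_sum_sign (α β : ℝ) (hα0 : 0 < α) (hαπ : α < π) (hβ0 : 0 < β) (hβπ : β < π) :
    (0 ≤ Real.cos α / Real.sin α + Real.cos β / Real.sin β) ↔ α + β ≤ π := by
  have hsa : 0 < Real.sin α := Real.sin_pos_of_pos_of_lt_pi hα0 hαπ
  have hsb : 0 < Real.sin β := Real.sin_pos_of_pos_of_lt_pi hβ0 hβπ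
  have hsum : Real.cos α / Real.sin α + Real.cos β / Real.sin β
      = Real.sin (α + β) / (Real.sin α * Real.sin β) := by
    rw [Real.sin_add, div_add_div _ _ hsa.ne' hsb.ne']
    ring_nf
  rw [hsum, le_div_iff₀ (mul_pos hsa hsb), zero_mul]
  constructor
  · intro h
    by_contra hc
    push_neg at hc
    have h1 : 0 < α + β - π := by linarith
    have h2 : α + β - π < π := by linarith
    have := Real.sin_pos_of_pos_of_lt_pi h1 h2
    rw [show α + β - π = -(π - (α + β)) by ring] at this
    rw [Real.sin_neg, Real.sin_pi_sub] at this
    linarith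
  · intro h
    exact Real.sin_nonneg_of_nonneg_of_le_pi (by linarith) h

theorem my_gradient_affine (g : E2) (c : ℝ) (x : E2) :
    gradient (fun y => c + ⟪g, y⟫) x = g := by
  have h : HasGradientAt (fun y => c + ⟪g, y⟫) g x := by
    rw [hasGradientAt_iff_hasFDerivAt]
    have := (hasFDerivAt_const c x).add (innerSL ℝ g).hasFDerivAt
    rw [zero_add] at this
    exact this
  exact h.gradient

end Aux

/-- Off-diagonal stiffness entry for an interior edge shared by two triangles:
R_ij = -(1/2)(cot α_k⁺ + cot α_k⁻), and R_ij ≤ 0 iff α_k⁺ + α_k⁻ ≤ π. -/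
theorem p1_stiffness_interior_edge (ai aj akp akm : EuclideanSpace ℝ (Fin 2))
    (hindp : AffineIndependent ℝ ![ai, aj, akp])
    (hindm : AffineIndependent ℝ ![ai, aj, akm])
    (Kp Km : Set (EuclideanSpace ℝ (Fin 2)))
    (hKp : Kp = convexHull ℝ {ai, aj, akp})
    (hKm : Km = convexHull ℝ {ai, aj, akm})
    (areap aream : ℝ) (hposp : 0 < areap) (hposm : 0 < aream)
    (hvolp : volume Kp = ENNReal.ofReal areap)
    (hvolm : volume Km = ENNReal.ofReal aream)
    (gip gjp gim gjm : EuclideanSpace ℝ (Fin 2)) (cip cjp cim cjm : ℝ)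
    (θip θjp θim θjm : EuclideanSpace ℝ (Fin 2) → ℝ)
    (hθip : ∀ x, θip x = cip + ⟪gip, x⟫) (hθjp : ∀ x, θjp x = cjp + ⟪gjp, x⟫)
    (hθim : ∀ x, θim x = cim + ⟪gim, x⟫) (hθjm : ∀ x, θjm x = cjm + ⟪gjm, x⟫)
    (hipi : θip ai = 1) (hipj : θip aj = 0) (hipk : θip akp = 0)
    (hjpi : θjp ai = 0) (hjpj : θjp aj = 1) (hjpk : θjp akp = 0)
    (himi : θim ai = 1) (himj : θim aj = 0) (himk : θim akm = 0)
    (hjmi : θjm ai = 0) (hjmj : θjm aj = 1) (hjmk : θjm akm = 0) :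
    ((∫ x in Kp, ⟪gradient θip x, gradient θjp x⟫)
        + (∫ x in Km, ⟪gradient θim x, gradient θjm x⟫)
      = -(1/2) * (Real.cos (∠ ai akp aj) / Real.sin (∠ ai akp aj)
          + Real.cos (∠ ai akm aj) / Real.sin (∠ ai akm aj))) ∧
    ((∫ x in Kp, ⟪gradient θip x, gradient θjp x⟫)
        + (∫ x in Km, ⟪gradient θim x, gradient θjm x⟫) ≤ 0
      ↔ ∠ ai akp aj + ∠ ai akm aj ≤ π) := by
  -- rewrite the θ's as explicit affine functions
  have hfip : θip = fun y => cip + ⟪gip, y⟫ := funext hθip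
  have hfjp : θjp = fun y => cjp + ⟪gjp, y⟫ := funext hθjp
  have hfim : θim = fun y => cim + ⟪gim, y⟫ := funext hθim
  have hfjm : θjm = fun y => cjm + ⟪gjm, y⟫ := funext hθjm
  -- inner product conditions
  have key : ∀ (g : EuclideanSpace ℝ (Fin 2)) (c : ℝ) (θ : EuclideanSpace ℝ (Fin 2) → ℝ),
      (∀ x, θ x = c + ⟪g, x⟫) → ∀ x y, ⟪g, x - y⟫ = θ x - θ y := by
    intro g c θ hθ x y
    rw [hθ, hθ, inner_sub_right]
    ring
  have kp := my_tri_key ai aj akp gip gjp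
    (by rw [key gip cip θip hθip, hipi, hipk]; norm_num)
    (by rw [key gip cip θip hθip, hipj, hipk]; norm_num)
    (by rw [key gjp cjp θjp hθjp, hjpi, hjpk]; norm_num)
    (by rw [key gjp cjp θjp hθjp, hjpj, hjpk]; norm_num)
    areap hposp (by rw [← hKp]; exact hvolp)
  have km := my_tri_key ai aj akm gim gjm
    (by rw [key gim cim θim hθim, himi, himk]; norm_num)
    (by rw [key gim cim θim hθim, himj, himk]; norm_num)
    (by rw [key gjm cjm θjm hθjm, hjmi, hjmk]; norm_num)
    (by rw [key gjm cjm θjm hθjm, hjmj, hjmk]; norm_num)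
    aream hposm (by rw [← hKm]; exact hvolm)
  -- evaluate the integrals
  have hintp : (∫ x in Kp, ⟪gradient θip x, gradient θjp x⟫) = areap * ⟪gip, gjp⟫ := by
    have : ∀ x, ⟪gradient θip x, gradient θjp x⟫ = ⟪gip, gjp⟫ := by
      intro x
      rw [hfip, hfjp, my_gradient_affine, my_gradient_affine]
    simp_rw [this]
    rw [setIntegral_const, measureReal_def, hvolp, ENNReal.toReal_ofReal hposp.le, smul_eq_mul]
  have hintm : (∫ x in Km, ⟪gradient θim x, gradient θjm x⟫) = aream * ⟪gim, gjm⟫ := by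
    have : ∀ x, ⟪gradient θim x, gradient θjm x⟫ = ⟪gim, gjm⟫ := by
      intro x
      rw [hfim, hfjm, my_gradient_affine, my_gradient_affine]
    simp_rw [this]
    rw [setIntegral_const, measureReal_def, hvolm, ENNReal.toReal_ofReal hposm.le, smul_eq_mul]
  obtain ⟨hp, hp0, hpπ⟩ := kp
  obtain ⟨hm, hm0, hmπ⟩ := km
  have hmain : (∫ x in Kp, ⟪gradient θip x, gradient θjp x⟫)
      + (∫ x in Km, ⟪gradient θim x, gradient θjm x⟫)
      = -(1/2) * (Real.cos (∠ ai akp aj) / Real.sin (∠ ai akp aj)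
          + Real.cos (∠ ai akm aj) / Real.sin (∠ ai akm aj)) := by
    rw [hintp, hintm, hp, hm]
    ring
  refine ⟨hmain, ?_⟩
  rw [hmain]
  rw [← my_cot_sum_sign _ _ hp0 hpπ hm0 hmπ]
  constructor
  · intro h
    nlinarith
  · intro h
    nlinarith
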